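/- arXiv:1301.5942 — 2 statements merged into one kernel-verified Lean document; each statement's English description precedes it below -/
import Mathlib

section
/- Fix integers 2 ≤ M_x ≤ M_y and let γ ∈ (0, log M_x). Then the equation (ε/2)·log[(M_x·M_y − 1)(M_x − 1)(M_y − 1)] + 3·ℋ(ε/2) = γ has exactly one solution ε in the open interval (0, 2 − 2/M_x). -/
open scoped BigOperators

/-- `p` is a probability distribution on the finite type `α`. -/
def IsDist {α : Type*} [Fintype α] (p : α → ℝ) : Prop :=
  (∀ a, 0 ≤ p a) ∧ ∑ a, p a = 1

/-- Shannon entropy (natural logarithm, with `0 · log 0 = 0`). -/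
noncomputable def entropy {α : Type*} [Fintype α] (p : α → ℝ) : ℝ :=
  -∑ a, p a * Real.log (p a)

/-- Variational distance between two distributions on the same finite set. -/
noncomputable def Vdist {α : Type*} [Fintype α] (p q : α → ℝ) : ℝ :=
  ∑ a, |p a - q a|

/-- First marginal of a joint distribution. -/
noncomputable def margX {Mx My : ℕ} (p : Fin Mx × Fin My → ℝ) : Fin Mx → ℝ :=
  fun i => ∑ j, p (i, j)

/-- Second marginal of a joint distribution. -/
noncomputable def margY {Mx My : ℕ} (p : Fin Mx × Fin My → ℝ) : Fin My → ℝ :=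
  fun j => ∑ i, p (i, j)

/-- Mutual information of a joint distribution. -/
noncomputable def mutInfo {Mx My : ℕ} (p : Fin Mx × Fin My → ℝ) : ℝ :=
  entropy (margX p) + entropy (margY p) - entropy p

/-- Binary entropy function. -/
noncomputable def binEnt (x : ℝ) : ℝ :=
  -x * Real.log x - (1 - x) * Real.log (1 - x)

/-!
Substituting `t = ε/2` and writing `L` for the logarithm of the product, the left-hand side is
`g t = t L + 3 ℋ(t) = 3 qaryEntropy Mx t + t (L - 3 log (Mx - 1))`. The product is at least
`(Mx - 1)³`, so the second summand is nondecreasing, while the `Mx`-ary entropy is strictly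
increasing on `[0, 1 - 1/Mx]` and attains its maximum `log Mx` there. Hence `g` increases strictly
from `0` to at least `3 log Mx > γ`, and the intermediate value theorem gives the unique root.
-/

open Real Set

lemma binEnt_eq_binEntropy : binEnt = binEntropy := by
  ext x
  simp only [binEnt, binEntropy, log_inv]
  ring

lemma existsUnique_mem_Ioo_eq_of_strictMonoOn {α δ : Type*}
    [ConditionallyCompleteLinearOrder α] [TopologicalSpace α] [OrderTopology α]
    [DenselyOrdered α] [LinearOrder δ] [TopologicalSpace δ] [OrderClosedTopology δ]
    {f : α → δ} {a b : α} {y : δ} (hab : a ≤ b) (hcont : ContinuousOn f (Icc a b))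
    (hmono : StrictMonoOn f (Icc a b)) (hy : y ∈ Ioo (f a) (f b)) :
    ∃! x, x ∈ Ioo a b ∧ f x = y := by
  obtain ⟨x, hx, rfl⟩ := intermediate_value_Ioo hab hcont hy
  exact ⟨x, ⟨hx, rfl⟩, fun x' ⟨hx', hfx'⟩ =>
    hmono.injOn (Ioo_subset_Icc_self hx') (Ioo_subset_Icc_self hx) hfx'⟩

namespace Real

lemma qaryEntropy_one_sub_one_div {q : ℕ} (hq : 2 ≤ q) :
    qaryEntropy q (1 - 1 / q) = log q := by
  have hq' : (2 : ℝ) ≤ q := by exact_mod_cast hq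
  have hq1 : (q : ℝ) - 1 ≠ 0 := by linarith
  have h : (1 - 1 / (q : ℝ))⁻¹ = q / (q - 1) := by field_simp
  rw [qaryEntropy, binEntropy_one_sub, binEntropy, h, one_div, inv_inv,
    log_div (by positivity) hq1]
  push_cast
  ring

lemma mul_add_mul_binEntropy_eq (q : ℕ) (L c t : ℝ) :
    t * L + c * binEntropy t = c * qaryEntropy q t + t * (L - c * log (q - 1)) := by
  simp only [qaryEntropy, Int.cast_sub, Int.cast_natCast, Int.cast_one]
  ring

lemma strictMonoOn_mul_add_mul_binEntropy {q : ℕ} (hq : 2 ≤ q) {L c : ℝ} (hc : 0 < c)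
    (hL : c * log (q - 1) ≤ L) :
    StrictMonoOn (fun t => t * L + c * binEntropy t) (Icc 0 (1 - 1 / q)) := by
  simp only [mul_add_mul_binEntropy_eq q]
  exact ((strictMono_mul_left_of_pos hc).comp_strictMonoOn (qaryEntropy_strictMonoOn hq)
    ).add_monotone ((monotone_mul_right_of_nonneg (sub_nonneg.2 hL)).monotoneOn _)

end Real

lemma pow_three_sub_one_le_mul {x y : ℝ} (hx : 1 ≤ x) (hxy : x ≤ y) :
    (x - 1) ^ 3 ≤ (x * y - 1) * (x - 1) * (y - 1) := by
  have hxy' : x - 1 ≤ x * y - 1 := by nlinarith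
  have : (x - 1) * (x - 1) ≤ (x * y - 1) * (y - 1) :=
    mul_le_mul hxy' (by linarith) (by linarith) (by linarith)
  nlinarith

/-- for `γ ∈ (0, log Mx)` the equation
`(ε/2)·log[(Mx·My-1)(Mx-1)(My-1)] + 3·ℋ(ε/2) = γ` has exactly one solution
in the open interval `(0, 2 - 2/Mx)`. -/
theorem existsUnique_root {Mx My : ℕ} (hMx : 2 ≤ Mx) (hMxy : Mx ≤ My)
    (γ : ℝ) (hγ : γ ∈ Set.Ioo 0 (Real.log (Mx : ℝ))) :
    ∃! ε : ℝ, ε ∈ Set.Ioo 0 (2 - 2 / (Mx : ℝ)) ∧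
      ε / 2 * Real.log (((Mx : ℝ) * My - 1) * ((Mx : ℝ) - 1) * ((My : ℝ) - 1)) +
        3 * binEnt (ε / 2) = γ := by
  obtain ⟨hγ0, hγlog⟩ := hγ
  set L := log (((Mx : ℝ) * My - 1) * ((Mx : ℝ) - 1) * ((My : ℝ) - 1))
  have hx : (2 : ℝ) ≤ Mx := by exact_mod_cast hMx
  have hxy : (Mx : ℝ) ≤ My := by exact_mod_cast hMxy
  have hinv : 1 / (Mx : ℝ) ≤ 1 / 2 := one_div_le_one_div_of_le two_pos hx
  have h2inv : 2 / (Mx : ℝ) = 2 * (1 / Mx) := by ring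
  have hL : 3 * log (Mx - 1) ≤ L := by
    rw [← Nat.cast_ofNat, ← log_pow]
    exact log_le_log (pow_pos (by linarith) 3) (pow_three_sub_one_le_mul (by linarith) hxy)
  have hmono : StrictMonoOn (fun ε => ε / 2 * L + 3 * binEnt (ε / 2)) (Icc 0 (2 - 2 / Mx)) := by
    rw [binEnt_eq_binEntropy]
    refine (strictMonoOn_mul_add_mul_binEntropy hMx three_pos hL).comp
      ((strictMono_div_right_of_pos two_pos).strictMonoOn _) ?_
    exact fun ε ⟨h0, hε⟩ => ⟨by linarith, by linarith⟩
  have hend : (2 - 2 / Mx) / 2 = 1 - 1 / (Mx : ℝ) := by ring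
  refine existsUnique_mem_Ioo_eq_of_strictMonoOn (by linarith) ?_ hmono ⟨?_, ?_⟩
  · rw [binEnt_eq_binEntropy]
    fun_prop
  · simpa [binEnt_eq_binEntropy] using hγ0
  · simp only [hend, binEnt_eq_binEntropy, mul_add_mul_binEntropy_eq Mx,
      qaryEntropy_one_sub_one_div hMx]
    have : 0 ≤ (1 - 1 / (Mx : ℝ)) * (L - 3 * log (Mx - 1)) :=
      mul_nonneg (by linarith) (by linarith)
    linarith
end

section
/- Let p and q be probability distributions on a finite set of size M ≥ 2. If ε satisfies V(p,q) ≤ ε ≤ 2 − 2/M, where V denotes variational distance, then |H(p) − H(q)| ≤ (ε/2)·log(M − 1) + ℋ(ε/2), where H denotes Shannon entropy and ℋ the binary entropy function (natural logarithms). -/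
/-!
Couple `p` and `q` maximally: keep the common mass `min p q` on the diagonal and pair the excesses
of `p` over `q` and of `q` over `p` independently, so that `X ∼ p`, `Y ∼ q` and
`P(X ≠ Y) = V(p, q) / 2`. Then `H(p) - H(q) ≤ H(X, Y) - H(Y) = H(X | Y)`, and Fano's inequality
(the log-sum inequality applied on and off the diagonal) gives
`H(X | Y) ≤ P(X ≠ Y) log (M - 1) + ℋ(P(X ≠ Y))`. The right-hand side is the `M`-ary entropy of
`V(p, q) / 2`, which increases on `[0, 1 - 1/M]`, so `V(p, q)` may be replaced by `ε`.
-/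

open scoped BigOperators

open Real Finset

noncomputable def condEntropy {α β : Type*} [Fintype α] [Fintype β] (w : α × β → ℝ) : ℝ :=
  entropy w - entropy (fun b => ∑ a, w (a, b))

lemma mul_log_sub_log_le {c d C D : ℝ} (hc : 0 ≤ c) (hd : 0 ≤ d) (hcd : d = 0 → c = 0)
    (hC : 0 < C) (hD : 0 < D) :
    c * (log d - log c) ≤ c * (log D - log C) + (d * C / D - c) := by
  rcases hc.eq_or_lt with rfl | hc
  · simpa using by positivity
  have hd : 0 < d := hd.lt_of_ne fun h => hc.ne' (hcd h.symm)
  have hlog : log d - log c - (log D - log C) = log (d * C / (c * D)) := by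
    rw [log_div (by positivity) (by positivity), log_mul hd.ne' hC.ne', log_mul hc.ne' hD.ne']
    ring
  have := mul_le_mul_of_nonneg_left (log_le_sub_one_of_pos (by positivity : 0 < d * C / (c * D)))
    hc.le
  rw [← hlog] at this
  have hcancel : c * (d * C / (c * D) - 1) = d * C / D - c := by field_simp
  linarith

/-- The log-sum inequality. -/
theorem sum_mul_log_sub_log_le {ι : Type*} (s : Finset ι) {c d : ι → ℝ}
    (hc : ∀ i ∈ s, 0 ≤ c i) (hd : ∀ i ∈ s, 0 ≤ d i) (hcd : ∀ i ∈ s, d i = 0 → c i = 0) :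
    ∑ i ∈ s, c i * (log (d i) - log (c i)) ≤
      (∑ i ∈ s, c i) * (log (∑ i ∈ s, d i) - log (∑ i ∈ s, c i)) := by
  rcases (sum_nonneg hc).eq_or_lt with hC | hC
  · have hc0 : ∀ i ∈ s, c i = 0 := (sum_eq_zero_iff_of_nonneg hc).1 hC.symm
    rw [← hC, zero_mul]
    exact (sum_eq_zero fun i hi => by rw [hc0 i hi, zero_mul]).le
  set C := ∑ i ∈ s, c i
  set D := ∑ i ∈ s, d i
  have hD : 0 < D := by
    refine (sum_nonneg hd).lt_of_ne fun hD => hC.ne' ?_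
    exact sum_eq_zero fun i hi => hcd i hi ((sum_eq_zero_iff_of_nonneg hd).1 hD.symm i hi)
  calc ∑ i ∈ s, c i * (log (d i) - log (c i))
      ≤ ∑ i ∈ s, (c i * (log D - log C) + (d i * C / D - c i)) :=
        sum_le_sum fun i hi => mul_log_sub_log_le (hc i hi) (hd i hi) (hcd i hi) hC hD
    _ = C * (log D - log C) + (D * C / D - C) := by
        rw [sum_add_distrib, ← sum_mul, sum_sub_distrib, ← sum_div, ← sum_mul]
    _ = C * (log D - log C) := by field_simp; ring

lemma sum_eq_sum_diag_add_sum_offDiag {α M : Type*} [Fintype α] [DecidableEq α] [AddCommMonoid M]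
    (f : α × α → M) : ∑ x, f x = ∑ a, f (a, a) + ∑ x ∈ univ.offDiag, f x := by
  rw [← sum_diag, ← sum_union (disjoint_diag_offDiag _), diag_union_offDiag, univ_product_univ]

lemma min_add_posPart_sub {G : Type*} [AddCommGroup G] [LinearOrder G] [IsOrderedAddMonoid G]
    (x y : G) : min x y + (x - y)⁺ = x := by
  rcases le_total x y with h | h <;> simp [h]

section Joint

variable {α β : Type*} [Fintype α] [Fintype β]

lemma condEntropy_eq_sum (w : α × β → ℝ) :
    condEntropy w = ∑ x, w x * (log (∑ a, w (a, x.2)) - log (w x)) := by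
  have hmarg : ∑ b, (∑ a, w (a, b)) * log (∑ a, w (a, b)) =
      ∑ x, w x * log (∑ a, w (a, x.2)) := by
    simp only [Fintype.sum_prod_type_right, sum_mul]
  simp only [condEntropy, entropy, mul_sub, sum_sub_distrib, hmarg]
  ring

lemma entropy_fst_le_entropy {w : α × β → ℝ} (hw : ∀ x, 0 ≤ w x) :
    entropy (fun a => ∑ b, w (a, b)) ≤ entropy w := by
  simp only [entropy, neg_le_neg_iff, Fintype.sum_prod_type, sum_mul]
  refine sum_le_sum fun a _ => sum_le_sum fun b _ => ?_
  rcases (hw (a, b)).eq_or_lt with h | h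
  · simp [← h]
  · exact mul_le_mul_of_nonneg_left
      (log_le_log h (single_le_sum (fun b _ => hw (a, b)) (mem_univ b))) h.le

end Joint

theorem condEntropy_le_fano {α : Type*} [Fintype α] {w : α × α → ℝ} (hw : ∀ x, 0 ≤ w x)
    (hw1 : ∑ x, w x = 1) :
    condEntropy w ≤ (∑ x ∈ univ.offDiag, w x) * log (Fintype.card α - 1) +
      binEnt (∑ x ∈ univ.offDiag, w x) := by
  classical
  set r : α → ℝ := fun b => ∑ a, w (a, b)
  set e := ∑ x ∈ univ.offDiag, w x
  have hwr (x : α × α) : w x ≤ r x.2 := single_le_sum (fun a _ => hw (a, x.2)) (mem_univ x.1)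
  have hr1 : ∑ b, r b = 1 := by rw [← hw1, Fintype.sum_prod_type_right]
  have hdiag : ∑ a, w (a, a) = 1 - e := by
    rw [← hw1, sum_eq_sum_diag_add_sum_offDiag w]; ring
  have hoff : ∑ x ∈ univ.offDiag, r x.2 = Fintype.card α - 1 := by
    have := sum_eq_sum_diag_add_sum_offDiag fun x : α × α => r x.2
    simp only [Fintype.sum_prod_type, hr1, sum_const, card_univ, nsmul_eq_mul, mul_one] at this
    linarith
  have hlogsum (s : Finset (α × α)) := sum_mul_log_sub_log_le s (fun x _ => hw x)
    (fun x _ => (hw x).trans (hwr x)) fun x _ h => le_antisymm (h ▸ hwr x) (hw x)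
  have hdiagsum := hlogsum univ.diag
  have hoffsum := hlogsum univ.offDiag
  simp only [sum_diag, hdiag, hr1, log_one] at hdiagsum
  rw [hoff] at hoffsum
  rw [condEntropy_eq_sum, sum_eq_sum_diag_add_sum_offDiag]
  calc _ ≤ (1 - e) * (0 - log (1 - e)) + e * (log (Fintype.card α - 1) - log e) :=
        add_le_add hdiagsum hoffsum
    _ = _ := by rw [binEnt]; ring

section Coupling

variable {α : Type*} [Fintype α] {p q : α → ℝ}

lemma Vdist_comm (p q : α → ℝ) : Vdist p q = Vdist q p := by
  simp only [Vdist, abs_sub_comm]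

lemma Vdist_nonneg (p q : α → ℝ) : 0 ≤ Vdist p q :=
  sum_nonneg fun _ _ => abs_nonneg _

lemma Vdist_eq_zero_iff : Vdist p q = 0 ↔ p = q := by
  simp [Vdist, sum_eq_zero_iff_of_nonneg, sub_eq_zero, funext_iff]

lemma sum_posPart_sub_eq_half_Vdist (h : ∑ a, p a = ∑ a, q a) :
    ∑ a, (p a - q a)⁺ = Vdist p q / 2 := by
  have hsub : ∑ a, ((p a - q a)⁺ - (p a - q a)⁻) = 0 := by
    simp only [posPart_sub_negPart, sum_sub_distrib, h, sub_self]
  have hadd : ∑ a, ((p a - q a)⁺ + (p a - q a)⁻) = Vdist p q := by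
    simp only [posPart_add_negPart, Vdist]
  rw [sum_sub_distrib] at hsub
  rw [sum_add_distrib] at hadd
  linarith

variable [DecidableEq α]

/-- The excesses `(p - q)⁺` and `(q - p)⁺` both have mass `V(p, q) / 2`; when it is `0` we have
`p = q`, and the division by zero is harmless. -/
noncomputable def maxCoupling (p q : α → ℝ) (x : α × α) : ℝ :=
  (if x.1 = x.2 then min (p x.1) (q x.1) else 0) +
    (p x.1 - q x.1)⁺ * (q x.2 - p x.2)⁺ / (Vdist p q / 2)

lemma maxCoupling_nonneg (hp : ∀ a, 0 ≤ p a) (hq : ∀ a, 0 ≤ q a) (x : α × α) :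
    0 ≤ maxCoupling p q x := by
  have := Vdist_nonneg p q
  have := hp x.1
  have := hq x.1
  unfold maxCoupling
  split_ifs <;> positivity

lemma maxCoupling_diag (a : α) : maxCoupling p q (a, a) = min (p a) (q a) := by
  rcases le_total (p a) (q a) with h | h <;> simp [maxCoupling, h]

lemma sum_maxCoupling_fst (h : ∑ a, p a = ∑ a, q a) (a : α) :
    ∑ b, maxCoupling p q (a, b) = p a := by
  by_cases hV : Vdist p q = 0
  · obtain rfl := Vdist_eq_zero_iff.1 hV
    simp [maxCoupling]
  simp only [maxCoupling, sum_add_distrib, sum_ite_eq, mem_univ, if_true, ← mul_sum, ← sum_div,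
    sum_posPart_sub_eq_half_Vdist h.symm, Vdist_comm q p]
  rw [mul_div_cancel_right₀ _ (div_ne_zero hV two_ne_zero), min_add_posPart_sub]

lemma sum_maxCoupling_snd (h : ∑ a, p a = ∑ a, q a) (b : α) :
    ∑ a, maxCoupling p q (a, b) = q b := by
  by_cases hV : Vdist p q = 0
  · obtain rfl := Vdist_eq_zero_iff.1 hV
    simp [maxCoupling]
  simp only [maxCoupling, sum_add_distrib, sum_ite_eq', mem_univ, if_true, ← sum_mul, ← sum_div,
    sum_posPart_sub_eq_half_Vdist h]
  rw [mul_div_cancel_left₀ _ (div_ne_zero hV two_ne_zero), min_comm, min_add_posPart_sub]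

lemma sum_offDiag_maxCoupling (h : ∑ a, p a = ∑ a, q a) :
    ∑ x ∈ univ.offDiag, maxCoupling p q x = Vdist p q / 2 := by
  have htotal := sum_eq_sum_diag_add_sum_offDiag (maxCoupling p q)
  have hmin (a : α) : min (p a) (q a) = p a - (p a - q a)⁺ := by
    rw [eq_sub_iff_add_eq, min_add_posPart_sub]
  simp only [Fintype.sum_prod_type, sum_maxCoupling_fst h, maxCoupling_diag, hmin,
    sum_sub_distrib, sum_posPart_sub_eq_half_Vdist h] at htotal
  linarith

end Coupling

theorem entropy_sub_entropy_le {α : Type*} [Fintype α] {p q : α → ℝ} (hp : IsDist p)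
    (hq : IsDist q) :
    entropy p - entropy q ≤
      Vdist p q / 2 * log (Fintype.card α - 1) + binEnt (Vdist p q / 2) := by
  classical
  have h : ∑ a, p a = ∑ a, q a := hp.2.trans hq.2.symm
  have hw := maxCoupling_nonneg hp.1 hq.1
  have hfst : (fun a => ∑ b, maxCoupling p q (a, b)) = p := funext (sum_maxCoupling_fst h)
  have hsnd : (fun b => ∑ a, maxCoupling p q (a, b)) = q := funext (sum_maxCoupling_snd h)
  have hw1 : ∑ x, maxCoupling p q x = 1 := by
    simp only [Fintype.sum_prod_type, sum_maxCoupling_fst h, hp.2]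
  calc entropy p - entropy q
        = entropy (fun a => ∑ b, maxCoupling p q (a, b)) -
            entropy (fun b => ∑ a, maxCoupling p q (a, b)) := by rw [hfst, hsnd]
    _ ≤ condEntropy (maxCoupling p q) := sub_le_sub_right (entropy_fst_le_entropy hw) _
    _ ≤ _ := condEntropy_le_fano hw hw1
    _ = _ := by rw [sum_offDiag_maxCoupling h]

lemma mul_log_add_binEnt_eq_qaryEntropy (n : ℕ) (x : ℝ) :
    x * log (n - 1) + binEnt x = qaryEntropy n x := by
  rw [qaryEntropy, binEntropy, binEnt, log_inv, log_inv]
  push_cast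
  ring

/-- Ho–Yeung entropy-difference bound: for distributions `p, q` on a
finite set of size `M ≥ 2`, if `V(p,q) ≤ ε ≤ 2 - 2/M` then
`|H(p) - H(q)| ≤ (ε/2)·log(M-1) + ℋ(ε/2)`. -/
theorem entropy_diff_le {α : Type*} [Fintype α] (hM : 2 ≤ Fintype.card α)
    (p q : α → ℝ) (hp : IsDist p) (hq : IsDist q)
    (ε : ℝ) (hVε : Vdist p q ≤ ε) (hε : ε ≤ 2 - 2 / (Fintype.card α : ℝ)) :
    |entropy p - entropy q| ≤
      ε / 2 * Real.log ((Fintype.card α : ℝ) - 1) + binEnt (ε / 2) := by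
  have hmem {t : ℝ} (h0 : 0 ≤ t) (ht : t ≤ ε) : t / 2 ∈ Set.Icc (0 : ℝ) (1 - 1 / Fintype.card α) :=
    ⟨by positivity, by linarith [show 2 / (Fintype.card α : ℝ) = 2 * (1 / Fintype.card α) by ring]⟩
  have hmono : Vdist p q / 2 * log (Fintype.card α - 1) + binEnt (Vdist p q / 2) ≤
      ε / 2 * log (Fintype.card α - 1) + binEnt (ε / 2) := by
    simp only [mul_log_add_binEnt_eq_qaryEntropy]
    exact (qaryEntropy_strictMonoOn hM).monotoneOn (hmem (Vdist_nonneg p q) hVε)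
      (hmem ((Vdist_nonneg p q).trans hVε) le_rfl) (by linarith)
  rw [abs_sub_le_iff]
  exact ⟨(entropy_sub_entropy_le hp hq).trans hmono,
    (Vdist_comm p q ▸ entropy_sub_entropy_le hq hp).trans hmono⟩
end
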